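/- For every n and r ≥ 1, (n/4)·q(T_{n,r}) < e(T_{n,r}) + 1, where q(T_{n,r}) is the signless Laplacian spectral radius of the Turán graph T_{n,r}. Consequently, if G is an n-vertex graph with q(G) ≤ q(T_{n,r}), then e(G) ≤ e(T_{n,r}). -/

import Mathlib

open SimpleGraph Finset Matrix

/-- The signless Laplacian matrix `Q(G) = D(G) + A(G)` of a simple graph, over `ℝ`. -/
def signlessLaplacian {V : Type*} [Fintype V] [DecidableEq V]
    (G : SimpleGraph V) [DecidableRel G.Adj] : Matrix V V ℝ :=
  Matrix.diagonal (fun v => (G.degree v : ℝ)) + G.adjMatrix ℝ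

/-!
A positive vector `w` with `Q w ≤ C w` bounds the spectrum of the nonnegative matrix `Q` by `C`
(Collatz–Wielandt). In a complete multipartite graph, for `w` constant on parts,
`(Q w)_v = (n - 2 c_v) w_v + ∑ w` where `c_v` is the size of the part of `v`; hence
`w_v = (C - n + 2 c_v)⁻¹` is admissible as soon as these weights sum to at most `1`. In `T_{n,r}`
all parts have size `⌊n/r⌋` or `⌊n/r⌋ + 1`, and for `C = (4 e(T_{n,r}) + 2) / n` the sum condition
becomes an explicit polynomial inequality. Together with `q(G) ≥ 4 e(G) / n` (the Rayleigh
quotient of the all-ones vector) this gives `4 e(G) ≤ n q(G) ≤ n q(T_{n,r}) ≤ 4 e(T_{n,r}) + 2`.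
-/

theorem Matrix.IsHermitian.dotProduct_mulVec_le {ι : Type*} [Fintype ι] [DecidableEq ι]
    {M : Matrix ι ι ℝ} (hM : M.IsHermitian) {q : ℝ} (hq : q ∈ upperBounds (spectrum ℝ M))
    (x : ι → ℝ) : x ⬝ᵥ (M *ᵥ x) ≤ q * (x ⬝ᵥ x) := by
  have hpsd : (algebraMap ℝ (Matrix ι ι ℝ) q - M).PosSemidef := by
    refine posSemidef_iff_isHermitian_and_spectrum_nonneg.2 ⟨?_, ?_⟩
    · exact (IsSelfAdjoint.algebraMap _ (.all q)).sub hM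
    · rw [← spectrum.singleton_sub_eq]
      rintro _ ⟨_, rfl, μ, hμ, rfl⟩
      exact sub_nonneg.2 (hq hμ)
  simpa [sub_mulVec, Algebra.algebraMap_eq_smul_one, smul_mulVec, dotProduct_sub] using
    hpsd.dotProduct_mulVec_nonneg x

theorem Matrix.le_of_mem_spectrum_of_mulVec_le {ι : Type*} [Fintype ι] [DecidableEq ι]
    {M : Matrix ι ι ℝ} (hM : ∀ i j, 0 ≤ M i j) {w : ι → ℝ} (hw : ∀ i, 0 < w i) {c : ℝ}
    (hMw : M *ᵥ w ≤ c • w) {μ : ℝ} (hμ : μ ∈ spectrum ℝ M) : μ ≤ c := by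
  rw [← spectrum_toLin', ← Module.End.hasEigenvalue_iff_mem_spectrum] at hμ
  obtain ⟨v, hv⟩ := hμ.exists_hasEigenvector
  have hMv : M *ᵥ v = μ • v := by simpa using hv.apply_eq_smul
  obtain ⟨j, hj⟩ := Function.ne_iff.1 hv.2
  obtain ⟨i, -, hi⟩ := exists_max_image univ (fun i => |v i| / w i) ⟨j, mem_univ j⟩
  set t := |v i| / w i
  have hvt : ∀ j, |v j| ≤ t * w j := fun j => (div_le_iff₀ (hw j)).1 (hi j (mem_univ j))
  have ht : 0 < t := (div_pos (abs_pos.2 hj) (hw j)).trans_le (hi j (mem_univ j))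
  have key : |μ| * (t * w i) ≤ c * (t * w i) := calc
    |μ| * (t * w i) = |(M *ᵥ v) i| := by
      rw [hMv, Pi.smul_apply, smul_eq_mul, abs_mul, div_mul_cancel₀ _ (hw i).ne']
    _ ≤ ∑ j, M i j * (t * w j) := by
      refine (abs_sum_le_sum_abs _ _).trans (sum_le_sum fun j _ => ?_)
      rw [abs_mul, abs_of_nonneg (hM i j)]
      exact mul_le_mul_of_nonneg_left (hvt j) (hM i j)
    _ = t * (M *ᵥ w) i := by
      rw [mulVec, dotProduct, mul_sum]; exact sum_congr rfl fun j _ => by ring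
    _ ≤ t * (c * w i) := mul_le_mul_of_nonneg_left (hMw i) ht.le
    _ = c * (t * w i) := by ring
  exact (le_abs_self μ).trans (le_of_mul_le_mul_right key (mul_pos ht (hw i)))

section SignlessLaplacian

variable {V : Type*} [Fintype V] [DecidableEq V] (G : SimpleGraph V) [DecidableRel G.Adj]

lemma signlessLaplacian_isHermitian : (signlessLaplacian G).IsHermitian :=
  (isHermitian_diagonal_of_self_adjoint _ (.all _)).add G.isSymm_adjMatrix

lemma signlessLaplacian_nonneg (i j : V) : 0 ≤ signlessLaplacian G i j := by
  unfold signlessLaplacian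
  by_cases h : G.Adj i j <;> by_cases hij : i = j <;> simp [h, hij]

lemma signlessLaplacian_mulVec_apply (w : V → ℝ) (v : V) :
    (signlessLaplacian G *ᵥ w) v = G.degree v * w v + ∑ u ∈ G.neighborFinset v, w u := by
  simp [signlessLaplacian, add_mulVec, mulVec_diagonal, adjMatrix_mulVec_apply]

lemma four_mul_card_edgeFinset_le {q : ℝ}
    (hq : q ∈ upperBounds (spectrum ℝ (signlessLaplacian G))) :
    4 * (#G.edgeFinset : ℝ) ≤ Fintype.card V * q := by
  have h := (signlessLaplacian_isHermitian G).dotProduct_mulVec_le hq 1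
  have hsum : ∑ v, (G.degree v : ℝ) = 2 * #G.edgeFinset := by
    exact_mod_cast G.sum_degrees_eq_twice_card_edges
  simp only [one_dotProduct, dotProduct_one, signlessLaplacian_mulVec_apply, Pi.one_apply,
    mul_one, sum_const, card_neighborFinset_eq_degree, nsmul_eq_mul, sum_add_distrib,
    hsum, card_univ] at h
  linarith

end SignlessLaplacian

section Multipartite

variable {V α : Type*} [Fintype V] [DecidableEq α] {G : SimpleGraph V} [DecidableRel G.Adj]
  {f : V → α}

lemma neighborFinset_eq_filter_ne (hG : ∀ u v, G.Adj u v ↔ f u ≠ f v) (v : V) :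
    G.neighborFinset v = ({u | ¬ f u = f v} : Finset V) := by
  ext u; simp [hG, eq_comm]

lemma degree_add_card_fiber (hG : ∀ u v, G.Adj u v ↔ f u ≠ f v) (v : V) :
    G.degree v + #{u | f u = f v} = Fintype.card V := by
  rw [← card_neighborFinset_eq_degree, neighborFinset_eq_filter_ne hG, add_comm,
    card_filter_add_card_filter_not, card_univ]

lemma two_mul_card_edgeFinset_add_sum_card_fiber (hG : ∀ u v, G.Adj u v ↔ f u ≠ f v) :
    2 * #G.edgeFinset + ∑ v, #{u | f u = f v} = Fintype.card V ^ 2 := by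
  rw [← sum_degrees_eq_twice_card_edges, ← sum_add_distrib, sq, ← smul_eq_mul, ← card_univ,
    ← sum_const]
  exact sum_congr rfl fun v _ => degree_add_card_fiber hG v

variable [DecidableEq V]

lemma signlessLaplacian_mulVec_comp_apply (hG : ∀ u v, G.Adj u v ↔ f u ≠ f v) (g : α → ℝ)
    (v : V) : (signlessLaplacian G *ᵥ (g ∘ f)) v
      = (Fintype.card V - 2 * #{u | f u = f v}) * g (f v) + ∑ u, g (f u) := by
  have hdeg : (G.degree v : ℝ) = Fintype.card V - #{u | f u = f v} := by
    rw [← degree_add_card_fiber hG v]; push_cast; ring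
  have hfiber : ∑ u ∈ {u | f u = f v}, g (f u) = #{u | f u = f v} * g (f v) := by
    rw [sum_congr rfl fun u hu => by rw [(mem_filter.1 hu).2], sum_const, nsmul_eq_mul]
  rw [signlessLaplacian_mulVec_apply, neighborFinset_eq_filter_ne hG, hdeg,
    ← sum_filter_add_sum_filter_not univ (fun u => f u = f v), hfiber]
  simp only [Function.comp_apply]
  ring

theorem le_of_mem_spectrum_signlessLaplacian_of_sum_inv_le_one
    (hG : ∀ u v, G.Adj u v ↔ f u ≠ f v) {C : ℝ}
    (hC : ∀ v, 0 < C - Fintype.card V + 2 * #{u | f u = f v})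
    (hsum : ∑ v, (C - Fintype.card V + 2 * #{u | f u = f v})⁻¹ ≤ 1) {μ : ℝ}
    (hμ : μ ∈ spectrum ℝ (signlessLaplacian G)) : μ ≤ C := by
  set g : α → ℝ := fun a => (C - Fintype.card V + 2 * #{u | f u = a})⁻¹
  refine Matrix.le_of_mem_spectrum_of_mulVec_le (signlessLaplacian_nonneg G)
    (w := g ∘ f) (fun v => inv_pos.2 (hC v)) (fun v => ?_) hμ
  have hd : (C - Fintype.card V + 2 * #{u | f u = f v}) * g (f v) = 1 :=
    mul_inv_cancel₀ (hC v).ne'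
  rw [signlessLaplacian_mulVec_comp_apply hG, Pi.smul_apply, smul_eq_mul, Function.comp_apply]
  linarith

end Multipartite

lemma card_filter_mod_eq_mod (n r : ℕ) (v : Fin n) :
    #{u : Fin n | (u : ℕ) % r = v % r} = n / r + if v % r < n % r then 1 else 0 := by
  rcases r.eq_zero_or_pos with rfl | hr
  · simp [Fin.val_inj, filter_eq']
  rw [← Nat.count_modEq_card n hr, Nat.count_eq_card_filter_range, ← Nat.Iio_eq_range,
    ← Fin.map_valEmbedding_univ, filter_map, card_map]
  rfl

lemma sub_div_add_div_add_two_le_one {n m A : ℝ} (hmn : m ≤ n) (hA : 0 < A)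
    (hAn : A * n = n ^ 2 - 2 * m + 2) : (n - m) / A + m / (A + 2) ≤ 1 := by
  have hpoly : (A * (A + 2) - (n * (A + 2) - 2 * m)) * n ^ 2
      = 2 * (n - m) ^ 2 + 4 * (n - m) + 2 * (m - 1) ^ 2 + 2 := by
    linear_combination (A * n + (n ^ 2 - 2 * m + 2) + 2 * n - n ^ 2) * hAn
  have hnum : n * (A + 2) - 2 * m ≤ A * (A + 2) := by
    have : 0 < (A * (A + 2) - (n * (A + 2) - 2 * m)) * n ^ 2 := by
      rw [hpoly]; nlinarith
    linarith [pos_of_mul_pos_left this (by positivity)]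
  calc (n - m) / A + m / (A + 2) = (n * (A + 2) - 2 * m) / (A * (A + 2)) := by
        field_simp; ring
    _ ≤ 1 := (div_le_one (by positivity)).2 hnum

lemma two_mul_card_edgeFinset_turanGraph_add (n r : ℕ) :
    2 * #(turanGraph n r).edgeFinset + n * (n / r) + #{v : Fin n | v % r < n % r} = n ^ 2 := by
  have h := two_mul_card_edgeFinset_add_sum_card_fiber (G := turanGraph n r)
    (fun u v => turanGraph_adj)
  simp only [card_filter_mod_eq_mod, sum_add_distrib, sum_const, card_univ, Fintype.card_fin,
    smul_eq_mul, sum_boole] at h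
  linarith

theorem turanGraph_mul_le_of_mem_spectrum (n r : ℕ) {μ : ℝ}
    (hμ : μ ∈ spectrum ℝ (signlessLaplacian (turanGraph n r))) :
    n * μ ≤ 4 * #(turanGraph n r).edgeFinset + 2 := by
  rcases n.eq_zero_or_pos with rfl | hn
  · rw [Nat.cast_zero, zero_mul]; positivity
  have hn' : (0 : ℝ) < n := by exact_mod_cast hn
  set m : ℕ := #{v : Fin n | v % r < n % r}
  set b : Fin n → ℝ := fun v => if v % r < n % r then 1 else 0
  have hb : ∀ v, b v = 0 ∨ b v = 1 := fun v => by by_cases h : v % r < n % r <;> simp [b, h]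
  have hsum_b : ∑ v, b v = m := by simp [b, m, sum_boole]
  have hmn : (m : ℝ) ≤ n := by exact_mod_cast (card_filter_le _ _).trans_eq (card_fin n)
  set s : ℝ := ((n / r : ℕ) : ℝ)
  -- chosen so that `n - 2 * s + A = (4 e(T_{n,r}) + 2) / n`
  set A : ℝ := (n ^ 2 - 2 * m + 2) / n
  have hAn : A * n = n ^ 2 - 2 * m + 2 := div_mul_cancel₀ _ hn'.ne'
  have hA : 0 < A := div_pos (by nlinarith) hn'
  have hweight : ∀ v : Fin n, n - 2 * s + A - n + 2 * #{u : Fin n | (u : ℕ) % r = v % r}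
      = A + 2 * b v := fun v => by rw [card_filter_mod_eq_mod]; push_cast; ring
  have hμC := le_of_mem_spectrum_signlessLaplacian_of_sum_inv_le_one
    (f := fun v : Fin n => (v : ℕ) % r) (fun u v => turanGraph_adj) (C := n - 2 * s + A) ?_ ?_ hμ
  · have he : 2 * (#(turanGraph n r).edgeFinset : ℝ) + n * s + m = n ^ 2 := by
      simp only [s, m]; exact_mod_cast two_mul_card_edgeFinset_turanGraph_add n r
    calc n * μ ≤ n * (n - 2 * s + A) := by gcongr
      _ = 4 * #(turanGraph n r).edgeFinset + 2 := by linear_combination hAn - 2 * he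
  · intro v
    rw [Fintype.card_fin, hweight]
    rcases hb v with h | h <;> rw [h] <;> linarith
  · have hinv : ∀ v, (A + 2 * b v)⁻¹ = (1 - b v) / A + b v / (A + 2) := fun v => by
      rcases hb v with h | h <;> rw [h] <;> ring
    simp only [Fintype.card_fin, hweight, hinv, sum_add_distrib, ← sum_div, sum_sub_distrib,
      sum_const, card_univ, nsmul_eq_mul, mul_one, hsum_b]
    exact sub_div_add_div_add_two_le_one hmn hA hAn

theorem quarter_n_q_turan_lt_general (n r : ℕ) (qT : ℝ)
    (hqT : IsGreatest (spectrum ℝ (signlessLaplacian (turanGraph n r))) qT) :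
    ((n : ℝ) / 4) * qT < ((turanGraph n r).edgeFinset.card : ℝ) + 1 ∧
      ∀ (G : SimpleGraph (Fin n)) (_ : DecidableRel G.Adj) (qG : ℝ),
        IsGreatest (spectrum ℝ (signlessLaplacian G)) qG → qG ≤ qT →
          G.edgeFinset.card ≤ (turanGraph n r).edgeFinset.card := by
  have hT := turanGraph_mul_le_of_mem_spectrum n r hqT.1
  refine ⟨by linarith, fun G _ qG hqG hle => ?_⟩
  have hG := four_mul_card_edgeFinset_le G hqG.2
  rw [Fintype.card_fin] at hG
  have hlt : (#G.edgeFinset : ℝ) < #(turanGraph n r).edgeFinset + 1 := by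
    linarith [mul_le_mul_of_nonneg_left hle (Nat.cast_nonneg (α := ℝ) n)]
  exact Nat.lt_succ_iff.1 (by exact_mod_cast hlt)

/-- `(n/4) q(T_{n,r}) < e(T_{n,r}) + 1`; consequently any `n`-vertex graph `G` with
`q(G) ≤ q(T_{n,r})` satisfies `e(G) ≤ e(T_{n,r})`. -/
theorem quarter_n_q_turan_lt (n r : ℕ) (hr : 1 ≤ r) (qT : ℝ)
    (hqT : IsGreatest (spectrum ℝ (signlessLaplacian (turanGraph n r))) qT) :
    ((n : ℝ) / 4) * qT < ((turanGraph n r).edgeFinset.card : ℝ) + 1 ∧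
      ∀ (G : SimpleGraph (Fin n)) (_ : DecidableRel G.Adj) (qG : ℝ),
        IsGreatest (spectrum ℝ (signlessLaplacian G)) qG → qG ≤ qT →
          G.edgeFinset.card ≤ (turanGraph n r).edgeFinset.card :=
  quarter_n_q_turan_lt_general n r qT hqT
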